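/- Let G be a group obtained from a group π by adjoining generators z_1,...,z_n and relations z_i^e = w_i(z_1,...,z_n) coming from an R-nullhomologous system over π (i.e., G = (π * F⟨z_1,...,z_n⟩)/⟨⟨z_i^e w_i(z)^{-1}⟩⟩). Then the canonical homomorphism π → G induces an isomorphism on H_1(-;R) and a surjection on H_2(-;R). -/

import Mathlib

open scoped TensorProduct
open scoped commutatorElement

/-- The set of denominators of (reduced fractional expressions of) elements of `R ⊆ ℚ`. -/
def DR (R : Subring ℚ) : Set ℕ := {d | ∃ q ∈ R, q.den = d}

variable {G H A : Type*} [Group G] [Group H] [Group A]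

/-- Evaluation of a monomial over `G` in `n` indeterminates at a tuple of elements of `G`. -/
noncomputable def evalWord {n : ℕ} (g : Fin n → G) :
    Monoid.Coprod G (FreeGroup (Fin n)) →* G :=
  Monoid.Coprod.lift (MonoidHom.id G) (FreeGroup.lift g)

/-- The projection `G * F → F → F/[F,F]`. -/
noncomputable def toFreeAb (G : Type*) [Group G] (n : ℕ) :
    Monoid.Coprod G (FreeGroup (Fin n)) →* Abelianization (FreeGroup (Fin n)) :=
  Monoid.Coprod.lift 1 Abelianization.of

/-- An `R`-nullhomologous system of equations `xᵢ^e = wᵢ(x₁,…,xₙ)` over `G`. -/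
structure NullSys (R : Subring ℚ) (G : Type*) [Group G] where
  n : ℕ
  e : ℕ
  he : e ∈ DR R
  w : Fin n → Monoid.Coprod G (FreeGroup (Fin n))
  nullh : ∀ i, toFreeAb G n (w i) = 1

/-- A solution of a system of equations over `G`. -/
def NullSys.IsSolution {R : Subring ℚ} (S : NullSys R G) (g : Fin S.n → G) : Prop :=
  ∀ i, (g i) ^ S.e = evalWord g (S.w i)

/-- A group is `R`-closed if every `R`-nullhomologous system over it has a unique solution. -/
def IsRClosed (R : Subring ℚ) (A : Type*) [Group A] : Prop :=
  ∀ S : NullSys R A, ∃! g : Fin S.n → A, S.IsSolution g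

/-- A normal subgroup `N ≤ G` is `R`-invisible if it is normally finitely generated and every
element of `N/[G,N]` has (finite) order lying in `D_R`. -/
def IsRInvisible (R : Subring ℚ) {G : Type*} [Group G] (N : Subgroup G) : Prop :=
  N.Normal ∧
  (∃ s : Finset G, ↑s ⊆ (N : Set G) ∧ Subgroup.normalClosure ↑s = N) ∧
  ∀ x ∈ N, ∃ e ∈ DR R, x ^ e ∈ ⁅(⊤ : Subgroup G), N⁆
/-- `H₁(G;R) = H₁(G;ℤ) ⊗ R`, via the abelianization. -/
abbrev H1R (R : Subring ℚ) (G : Type*) [Group G] : Type _ :=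
  Additive (Abelianization G) ⊗[ℤ] R

/-- The map induced on `H₁(-;R)` by a group homomorphism. -/
noncomputable def H1Rmap (R : Subring ℚ) {G H : Type*} [Group G] [Group H] (φ : G →* H) :
    H1R R G →ₗ[ℤ] H1R R H :=
  TensorProduct.map (MonoidHom.toAdditive (Abelianization.map φ)).toIntLinearMap LinearMap.id

section Hopf

variable (G : Type*) [Group G]

/-- The canonical free presentation of `G`. -/
noncomputable def presHom : FreeGroup G →* G := FreeGroup.lift id

/-- The relation subgroup of the canonical free presentation of `G`. -/
noncomputable def relSub : Subgroup (FreeGroup G) := (presHom G).ker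

/-- The numerator `ker π ⊓ [F,F]` of the Hopf formula for `H₂(G)`. -/
noncomputable def hopfTop : Subgroup (FreeGroup G) :=
  relSub G ⊓ ⁅(⊤ : Subgroup (FreeGroup G)), (⊤ : Subgroup (FreeGroup G))⁆

/-- The denominator `[F, ker π]` of the Hopf formula for `H₂(G)`. -/
noncomputable def hopfBot : Subgroup (FreeGroup G) :=
  ⁅(⊤ : Subgroup (FreeGroup G)), relSub G⁆

noncomputable instance relSub_normal : (relSub G).Normal := MonoidHom.normal_ker _

noncomputable instance hopfBot_normal : (hopfBot G).Normal := Subgroup.commutator_normal _ _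

noncomputable instance hopfBot_subgroupOf_normal :
    ((hopfBot G).subgroupOf (hopfTop G)).Normal := Subgroup.normal_subgroupOf

/-- `H₂(G;ℤ)` via the Hopf formula `(ker π ⊓ [F,F])/[F, ker π]` for the canonical free
presentation `π : F(G) → G`. -/
abbrev H2Z : Type _ :=
  ↥(hopfTop G) ⧸ ((hopfBot G).subgroupOf (hopfTop G))

noncomputable instance H2ZCommGroup : CommGroup (H2Z G) :=
  { (inferInstance : Group (H2Z G)) with
    mul_comm := by
      intro a b
      induction a using QuotientGroup.induction_on with
      | H x =>
      induction b using QuotientGroup.induction_on with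
      | H y =>
      rw [← QuotientGroup.mk_mul, ← QuotientGroup.mk_mul, QuotientGroup.eq]
      rw [Subgroup.mem_subgroupOf]
      have : (((x * y)⁻¹ * (y * x) : ↥(hopfTop G)) : FreeGroup G)
          = ⁅((y : FreeGroup G))⁻¹, ((x : FreeGroup G))⁻¹⁆ := by
        simp [commutatorElement_def, mul_assoc]
      rw [this]
      exact Subgroup.commutator_mem_commutator (Subgroup.mem_top _)
        ((relSub G).inv_mem (Subgroup.mem_inf.mp x.2).1) }

variable {G} {H : Type*} [Group H]

theorem presHom_naturality (φ : G →* H) (x : FreeGroup G) :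
    presHom H (FreeGroup.map φ x) = φ (presHom G x) := by
  have : (presHom H).comp (FreeGroup.map φ) = φ.comp (presHom G) := by
    apply FreeGroup.ext_hom
    intro a
    simp [presHom]
  exact DFunLike.congr_fun this x

theorem map_mem_hopfTop (φ : G →* H) {x : FreeGroup G} (hx : x ∈ hopfTop G) :
    FreeGroup.map φ x ∈ hopfTop H := by
  rcases Subgroup.mem_inf.mp hx with ⟨h1, h2⟩
  refine Subgroup.mem_inf.mpr ⟨?_, ?_⟩
  · simp only [relSub, MonoidHom.mem_ker] at h1 ⊢
    rw [presHom_naturality, h1, map_one]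
  · have := Subgroup.mem_map_of_mem (FreeGroup.map φ) h2
    rw [Subgroup.map_commutator] at this
    exact Subgroup.commutator_mono le_top le_top this

theorem map_mem_hopfBot (φ : G →* H) {x : FreeGroup G} (hx : x ∈ hopfBot G) :
    FreeGroup.map φ x ∈ hopfBot H := by
  have := Subgroup.mem_map_of_mem (FreeGroup.map φ) hx
  rw [hopfBot, Subgroup.map_commutator] at this
  refine Subgroup.commutator_mono le_top ?_ this
  rintro y ⟨z, hz, rfl⟩
  simp only [relSub, MonoidHom.mem_ker] at hz ⊢
  rw [presHom_naturality, hz, map_one]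

/-- The map induced on `H₂(-;ℤ)` (Hopf formula) by a group homomorphism. -/
noncomputable def H2Zmap (φ : G →* H) : H2Z G →* H2Z H :=
  QuotientGroup.map _ _
    (MonoidHom.codRestrict ((FreeGroup.map φ).domRestrict (hopfTop G)) (hopfTop H)
      fun x => map_mem_hopfTop φ x.2)
    (by
      intro x hx
      rw [Subgroup.mem_subgroupOf] at hx
      rw [Subgroup.mem_comap, Subgroup.mem_subgroupOf]
      exact map_mem_hopfBot φ hx)

/-- The map induced on `H₂(-;R) = H₂(-;ℤ) ⊗ R` by a group homomorphism. -/
noncomputable def H2Rmap (R : Subring ℚ) (φ : G →* H) :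
    (Additive (H2Z G) ⊗[ℤ] R) →ₗ[ℤ] (Additive (H2Z H) ⊗[ℤ] R) :=
  TensorProduct.map (MonoidHom.toAdditive (H2Zmap φ)).toIntLinearMap LinearMap.id

end Hopf

/-- A homomorphism is 2-connected on `R`-homology if it induces an isomorphism on `H₁(-;R)`
and a surjection on `H₂(-;R)`. -/
def TwoConnected (R : Subring ℚ) {G H : Type*} [Group G] [Group H] (φ : G →* H) : Prop :=
  Function.Bijective (H1Rmap R φ) ∧ Function.Surjective (H2Rmap R φ)

/-- A group is finitely presented if it is presented by finitely many generators and
relations. -/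
def FinitelyPresentedGroup (G : Type*) [Group G] : Prop :=
  ∃ (n : ℕ) (rels : Finset (FreeGroup (Fin n))),
    Nonempty (G ≃* PresentedGroup (rels : Set (FreeGroup (Fin n))))

/-- The class `Ω^R`: homomorphisms of finitely generated groups into finitely presented groups
which are 2-connected on `R`-homology. -/
def MemOmega (R : Subring ℚ) {P G : Type*} [Group P] [Group G] (α : P →* G) : Prop :=
  Group.FG P ∧ FinitelyPresentedGroup G ∧ TwoConnected R α

/-!
Write `Q = π ∗ F(z₁, …, zₙ)` and `N` for the normal closure of the relators `rᵢ = zᵢ^e wᵢ⁻¹`,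
so that `G = Q / N`.

On `H₁`: since `wᵢ` dies in `F^ab`, the relation `rᵢ` reads `e • [zᵢ] = [wᵢ]_π` in `G^ab`. As `e`
is invertible in `R`, sending `zᵢ` to `[wᵢ]_π ⊗ 1/e` defines an inverse of `H₁(π;R) → H₁(G;R)`.

On `H₂` (Hopf's formula): `H₂(π) → H₂(Q)` is onto because `Q` only adds a free factor, and
`H₂(Q) → H₂(Q/N)` is onto as soon as `N ⊓ [Q,Q] ≤ [Q,N]`. Modulo `[Q,N]` the group `N` is
generated by the central images of the `rᵢ`, and the exponent sums in the `zᵢ` send `rᵢ` to `e`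
times the `i`-th basis vector; so a product of the `rᵢ` that lies in `[Q,Q]` is trivial
modulo `[Q,N]`.
-/

namespace Subgroup

theorem normal_of_le_center {K : Subgroup G} (hK : K ≤ center G) : K.Normal :=
  ⟨fun k hk g => by rwa [mem_center_iff.mp (hK hk) g, mul_inv_cancel_right]⟩

theorem normalClosure_eq_closure_of_subset_center {s : Set G} (hs : s ⊆ center G) :
    normalClosure s = closure s :=
  have := normal_of_le_center ((closure_le _).mpr hs)
  le_antisymm (normalClosure_le_normal subset_closure) closure_le_normalClosure

theorem mk_mem_center_of_mem {N : Subgroup G} [N.Normal] {k : G} (hk : k ∈ N) :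
    (k : G ⧸ ⁅(⊤ : Subgroup G), N⁆) ∈ center _ := by
  refine mem_center_iff.mpr fun g => ?_
  induction g using QuotientGroup.induction_on with
  | H g =>
    rw [← QuotientGroup.mk_mul, ← QuotientGroup.mk_mul, QuotientGroup.eq,
      show (g * k)⁻¹ * (k * g) = ⁅k⁻¹, g⁻¹⁆ by group, commutator_comm]
    exact commutator_mem_commutator (inv_mem hk) (mem_top _)

theorem map_normalClosure_mk' (s : Set G) :
    (normalClosure s).map (QuotientGroup.mk' ⁅(⊤ : Subgroup G), normalClosure s⁆) =
      closure ((↑) '' s) := by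
  rw [map_normalClosure _ _ (QuotientGroup.mk'_surjective _)]
  exact normalClosure_eq_closure_of_subset_center (Set.image_subset_iff.mpr
    fun x hx => mk_mem_center_of_mem (subset_normalClosure hx))

theorem apply_mem_commutator_of_map_le {f : G →* H} {K₁ K₂ : Subgroup G}
    {L₁ L₂ : Subgroup H} (h₁ : K₁.map f ≤ L₁) (h₂ : K₂.map f ≤ L₂) {x : G} (hx : x ∈ ⁅K₁, K₂⁆) :
    f x ∈ ⁅L₁, L₂⁆ := by
  have := mem_map_of_mem f hx
  rw [map_commutator] at this
  exact commutator_mono h₁ h₂ this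

open scoped IsMulCommutative in
theorem normalClosure_range_inf_commutator_le {M ι : Type*} [CommGroup M] [Fintype ι]
    (r : ι → G) (χ : G →* M) (hχ : ∀ k : ι → ℤ, ∏ i, χ (r i) ^ k i = 1 → k = 0) :
    normalClosure (Set.range r) ⊓ ⁅(⊤ : Subgroup G), ⊤⁆ ≤
      ⁅(⊤ : Subgroup G), normalClosure (Set.range r)⁆ := by
  rintro q ⟨hqN, hqc⟩
  set D := ⁅(⊤ : Subgroup G), normalClosure (Set.range r)⁆
  let c : ι → center (G ⧸ D) := fun i =>
    ⟨r i, mk_mem_center_of_mem (subset_normalClosure (Set.mem_range_self i))⟩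
  have hq : (q : G ⧸ D) ∈ (closure (Set.range c)).map (center _).subtype := by
    rw [MonoidHom.map_closure, ← Set.range_comp]
    have := mem_map_of_mem (QuotientGroup.mk' D) hqN
    rwa [map_normalClosure_mk', ← Set.range_comp] at this
  obtain ⟨x, hx, hxq⟩ := mem_map.mp hq
  obtain ⟨k, rfl⟩ := exists_of_mem_closure_range c x hx
  let χ' : G ⧸ D →* M := QuotientGroup.lift D χ
    ((commutator_mono le_top le_top).trans (Abelianization.commutator_subset_ker χ))
  have hk : ∏ i, χ (r i) ^ k i = 1 := by
    have : (χ'.comp (center _).subtype) (∏ i, c i ^ k i) = χ q := by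
      rw [MonoidHom.comp_apply, hxq]; rfl
    rw [map_prod] at this
    simpa [χ', c, MonoidHom.mem_ker.mp (Abelianization.commutator_subset_ker χ hqc)] using this
  have : (q : G ⧸ D) = 1 := by simp [← hxq, hχ k hk]
  rwa [QuotientGroup.eq_one_iff] at this

theorem exists_inv_mul_mem_commutator_of_mem_normalClosure_image (f : H →* G) (K : Subgroup H)
    {u : G} (hu : u ∈ normalClosure (f '' K)) :
    ∃ v ∈ K, (f v)⁻¹ * u ∈ ⁅(⊤ : Subgroup G), normalClosure (f '' K)⁆ := by
  set D := ⁅(⊤ : Subgroup G), normalClosure (f '' K)⁆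
  have := mem_map_of_mem (QuotientGroup.mk' D) hu
  rw [map_normalClosure_mk', ← Set.image_comp,
    show ((↑) ∘ f : H → G ⧸ D) = (QuotientGroup.mk' D).comp f from rfl,
    ← MonoidHom.map_closure, closure_eq] at this
  obtain ⟨v, hv, hvu⟩ := mem_map.mp this
  exact ⟨v, hv, QuotientGroup.eq.mp hvu⟩

end Subgroup

theorem commutatorElement_mul_mul_of_mem_center {x y c d : G} (hc : c ∈ Subgroup.center G)
    (hd : d ∈ Subgroup.center G) : ⁅x * c, y * d⁆ = ⁅x, y⁆ := by
  rw [Subgroup.mem_center_iff] at hc hd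
  rw [hc x, commutatorElement_mul_left_eq_conj_mul, commutatorElement_mul_right_eq_mul_conj,
    commutatorElement_eq_one_iff_mul_comm.mpr (hd x), commutatorElement_eq_one_iff_mul_comm.mpr
      (hc _).symm, mul_one, mul_one, mul_inv_cancel_right, ← hc, mul_inv_cancel_right]

/-- `α` and `β` differ by elements of `ker π`, which are central modulo `⁅⊤, ker π⁆`. -/
theorem mk_eq_mk_of_comp_eq_of_mem_commutator {F : Type*} [Group F] (π : F →* H) (α β : A →* F)
    (h : π.comp α = π.comp β) {y : A} (hy : y ∈ ⁅(⊤ : Subgroup A), (⊤ : Subgroup A)⁆) :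
    (α y : F ⧸ ⁅(⊤ : Subgroup F), π.ker⁆) = β y := by
  set f := (QuotientGroup.mk' ⁅(⊤ : Subgroup F), π.ker⁆).comp α
  set g := (QuotientGroup.mk' ⁅(⊤ : Subgroup F), π.ker⁆).comp β
  have hcen : ∀ a, (g a)⁻¹ * f a ∈ Subgroup.center _ := fun a =>
    Subgroup.mk_mem_center_of_mem (k := (β a)⁻¹ * α a) <| by
      rw [MonoidHom.mem_ker, map_mul, map_inv, inv_mul_eq_one]
      exact (DFunLike.congr_fun h a).symm
  have hcomm : ∀ a b, f ⁅a, b⁆ = g ⁅a, b⁆ := fun a b => by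
    rw [map_commutatorElement, map_commutatorElement, ← mul_inv_cancel_left (g a) (f a),
      ← mul_inv_cancel_left (g b) (f b), commutatorElement_mul_mul_of_mem_center (hcen a) (hcen b)]
  exact (Subgroup.commutator_le.mpr fun a _ b _ => hcomm a b :
    ⁅(⊤ : Subgroup A), (⊤ : Subgroup A)⁆ ≤ f.eqLocus g) hy

section Hopf

open Subgroup

@[simp]
theorem presHom_of (g : G) : presHom G (FreeGroup.of g) = g := FreeGroup.lift_apply_of

theorem presHom_surjective : Function.Surjective (presHom G) :=
  fun g => ⟨FreeGroup.of g, presHom_of g⟩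

theorem H2Zmap_comp (φ : G →* H) (ψ : H →* A) :
    H2Zmap (ψ.comp φ) = (H2Zmap ψ).comp (H2Zmap φ) := by
  refine QuotientGroup.monoidHom_ext _ (MonoidHom.ext fun x => ?_)
  show QuotientGroup.mk _ = QuotientGroup.mk _
  congr 1
  exact Subtype.ext (FreeGroup.map.comp _ _ _).symm

theorem H2Zmap_surjective_of_forall (φ : G →* H)
    (h : ∀ y ∈ hopfTop H, ∃ v ∈ hopfTop G, (FreeGroup.map φ v : FreeGroup H ⧸ hopfBot H) = y) :
    Function.Surjective (H2Zmap φ) := by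
  intro y
  induction y using QuotientGroup.induction_on with
  | H y =>
    obtain ⟨v, hv, hvy⟩ := h y y.2
    refine ⟨QuotientGroup.mk ⟨v, hv⟩, QuotientGroup.eq.mpr ?_⟩
    exact mem_subgroupOf.mpr (QuotientGroup.eq.mp hvy)

theorem map_mem_hopfBot_of_mem_commutator_ker {X : Type*} (Φ : FreeGroup X →* FreeGroup G)
    {d : FreeGroup X} (hd : d ∈ ⁅(⊤ : Subgroup (FreeGroup X)), ((presHom G).comp Φ).ker⁆) :
    Φ d ∈ hopfBot G := by
  refine apply_mem_commutator_of_map_le le_top ?_ hd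
  rw [← MonoidHom.comap_ker]
  exact map_comap_le _ _

theorem presHom_comp_map_of {X : Type*} (p : FreeGroup X →* G) :
    (presHom G).comp (FreeGroup.map fun x => p (.of x)) = p :=
  FreeGroup.ext_hom _ _ fun x => by simp

/-- Hopf's formula does not depend on the free presentation: every class in `H2Z G` is
represented by a relator of an arbitrary free presentation `p` of `G`. -/
theorem exists_mem_ker_inf_commutator_mk_map_eq {X : Type*} {p : FreeGroup X →* G}
    (hp : Function.Surjective p) {y : FreeGroup G} (hy : y ∈ hopfTop G) :
    ∃ u ∈ p.ker ⊓ ⁅(⊤ : Subgroup (FreeGroup X)), ⊤⁆,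
      (FreeGroup.map (fun x => p (.of x)) u : FreeGroup G ⧸ hopfBot G) = y := by
  set υ : FreeGroup G →* FreeGroup X := FreeGroup.lift (Function.surjInv hp)
  have hpυ : p.comp υ = presHom G :=
    FreeGroup.ext_hom _ _ fun g => by simp [υ, Function.surjInv_eq hp]
  obtain ⟨hyK, hyc⟩ := mem_inf.mp hy
  refine ⟨υ y, mem_inf.mpr ⟨?_, apply_mem_commutator_of_map_le le_top le_top hyc⟩, ?_⟩
  · rwa [MonoidHom.mem_ker, ← MonoidHom.comp_apply, hpυ]
  · refine mk_eq_mk_of_comp_eq_of_mem_commutator (presHom G)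
      ((FreeGroup.map fun x => p (.of x)).comp υ) (MonoidHom.id _) ?_ hyc
    rw [← MonoidHom.comp_assoc, presHom_comp_map_of, hpυ, MonoidHom.comp_id]

theorem presHom_comp_map (φ : H →* G) :
    (presHom G).comp (FreeGroup.map φ) = φ.comp (presHom H) :=
  MonoidHom.ext (presHom_naturality φ)

theorem H2Zmap_surjective_of_surjective {π : H →* G} (hπ : Function.Surjective π)
    (hker : π.ker ⊓ ⁅(⊤ : Subgroup H), ⊤⁆ ≤ ⁅(⊤ : Subgroup H), π.ker⁆) :
    Function.Surjective (H2Zmap π) := by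
  refine H2Zmap_surjective_of_forall π fun y hy => ?_
  set K := (π.comp (presHom H)).ker with hK
  obtain ⟨u, ⟨huK, huc⟩, huy⟩ :=
    exists_mem_ker_inf_commutator_mk_map_eq (p := π.comp (presHom H))
      (hπ.comp presHom_surjective) hy
  have hcomm : ⁅(⊤ : Subgroup H), π.ker⁆ = ⁅(⊤ : Subgroup (FreeGroup H)), K⁆.map (presHom H) := by
    rw [map_commutator, map_top_of_surjective _ presHom_surjective, hK, ← MonoidHom.comap_ker,
      map_comap_eq_self_of_surjective presHom_surjective]
  obtain ⟨d, hd, hdu⟩ : presHom H u ∈ ⁅(⊤ : Subgroup (FreeGroup H)), K⁆.map (presHom H) :=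
    hcomm ▸ hker ⟨huK, apply_mem_commutator_of_map_le le_top le_top huc⟩
  refine ⟨u * d⁻¹, mem_inf.mpr ⟨?_, mul_mem huc (inv_mem (commutator_mono le_top le_top hd))⟩, ?_⟩
  · show u * d⁻¹ ∈ (presHom H).ker
    rw [MonoidHom.mem_ker, map_mul, map_inv, hdu, mul_inv_cancel]
  · rw [hK, ← presHom_comp_map] at hd
    rw [map_mul, map_inv, QuotientGroup.mk_mul, QuotientGroup.mk_inv,
      (QuotientGroup.eq_one_iff _).mpr (map_mem_hopfBot_of_mem_commutator_ker _ hd), inv_one,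
      mul_one]
    simpa using huy

theorem H2Rmap_surjective {R : Subring ℚ} {φ : G →* H} (h : Function.Surjective (H2Zmap φ)) :
    Function.Surjective (H2Rmap R φ) :=
  TensorProduct.map_surjective (fun b => (h b.toMul).imp fun _ => congrArg Additive.ofMul)
    Function.surjective_id

end Hopf

section FreeProduct

open Subgroup Monoid

variable (G) (ι : Type*)

noncomputable def freePresCoprod : FreeGroup (G ⊕ ι) →* Coprod G (FreeGroup ι) :=
  FreeGroup.lift (Sum.elim Coprod.inl (Coprod.inr ∘ FreeGroup.of))

variable {G ι}

theorem freePresCoprod_comp_map_inl :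
    (freePresCoprod G ι).comp (FreeGroup.map Sum.inl) = Coprod.inl.comp (presHom G) :=
  FreeGroup.ext_hom _ _ fun g => by simp [freePresCoprod]

theorem freePresCoprod_surjective : Function.Surjective (freePresCoprod G ι) := by
  refine MonoidHom.range_eq_top.mp (top_le_iff.mp ?_)
  rw [← codisjoint_iff.mp Coprod.codisjoint_range_inl_range_inr]
  refine sup_le ?_ ?_
  · rintro _ ⟨g, rfl⟩
    exact ⟨.of (.inl g), by simp [freePresCoprod]⟩
  · rintro _ ⟨x, rfl⟩
    exact ⟨FreeGroup.map Sum.inr x, DFunLike.congr_fun (FreeGroup.ext_hom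
      ((freePresCoprod G ι).comp (FreeGroup.map Sum.inr)) Coprod.inr fun i => by
        simp [freePresCoprod]) x⟩

theorem ker_freePresCoprod :
    (freePresCoprod G ι).ker = normalClosure (FreeGroup.map Sum.inl '' relSub G) := by
  set M := normalClosure (FreeGroup.map Sum.inl '' (relSub G : Set (FreeGroup G)))
  refine le_antisymm (fun x hx => ?_) (normalClosure_le_normal ?_)
  · let ψ₀ : {f : FreeGroup G →* FreeGroup (G ⊕ ι) ⧸ M // (presHom G).ker ≤ f.ker} :=
      ⟨(QuotientGroup.mk' M).comp (FreeGroup.map Sum.inl), fun v hv =>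
        (QuotientGroup.eq_one_iff _).mpr (subset_normalClosure ⟨v, hv, rfl⟩)⟩
    let ψ := (presHom G).liftOfSurjective presHom_surjective ψ₀
    have hψ : (Coprod.lift ψ (FreeGroup.lift fun i =>
        ((FreeGroup.of (Sum.inr i) : FreeGroup (G ⊕ ι)) : _ ⧸ M))).comp (freePresCoprod G ι) =
          QuotientGroup.mk' M := by
      refine FreeGroup.ext_hom _ _ fun a => ?_
      rcases a with g | i
      · have := (presHom G).liftOfRightInverse_comp_apply _
          (Function.rightInverse_surjInv presHom_surjective) ψ₀ (FreeGroup.of g)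
        rw [presHom_of] at this
        simpa [freePresCoprod, ψ₀] using this
      · simp [freePresCoprod]
    have := DFunLike.congr_fun hψ x
    rwa [MonoidHom.comp_apply, hx, map_one, eq_comm, QuotientGroup.mk'_apply,
      QuotientGroup.eq_one_iff] at this
  · rintro _ ⟨v, hv, rfl⟩
    rw [SetLike.mem_coe, MonoidHom.mem_ker, ← MonoidHom.comp_apply, freePresCoprod_comp_map_inl,
      MonoidHom.comp_apply, hv, map_one]

theorem H2Zmap_inl_surjective :
    Function.Surjective (H2Zmap (Coprod.inl : G →* Coprod G (FreeGroup ι))) := by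
  refine H2Zmap_surjective_of_forall _ fun y hy => ?_
  obtain ⟨u, ⟨huK, huc⟩, huy⟩ :=
    exists_mem_ker_inf_commutator_mk_map_eq freePresCoprod_surjective hy
  rw [ker_freePresCoprod] at huK
  obtain ⟨v, hv, hd⟩ := exists_inv_mul_mem_commutator_of_mem_normalClosure_image _ _ huK
  rw [← ker_freePresCoprod, ← presHom_comp_map_of (freePresCoprod G ι)] at hd
  have hvu : FreeGroup.map Sum.inl v = u * ((FreeGroup.map Sum.inl v)⁻¹ * u)⁻¹ := by group
  refine ⟨v, mem_inf.mpr ⟨hv, ?_⟩, ?_⟩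
  · have hret : (FreeGroup.lift (Sum.elim FreeGroup.of (1 : ι → FreeGroup G))).comp
        (FreeGroup.map Sum.inl) = MonoidHom.id _ :=
      FreeGroup.ext_hom _ _ fun g => by simp
    have hvc : FreeGroup.map Sum.inl v ∈ commutator (FreeGroup (G ⊕ ι)) := by
      rw [hvu]
      exact mul_mem huc (inv_mem (commutator_mono le_top le_top hd))
    rw [← MonoidHom.id_apply _ v, ← hret, MonoidHom.comp_apply]
    exact apply_mem_commutator_of_map_le le_top le_top hvc
  · have hD : FreeGroup.map Coprod.inl v =
        FreeGroup.map (fun x => freePresCoprod G ι (.of x)) (FreeGroup.map Sum.inl v) := by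
      rw [FreeGroup.map.comp]
      congr 1
    rw [hD, hvu, map_mul, map_inv, QuotientGroup.mk_mul, QuotientGroup.mk_inv,
      (QuotientGroup.eq_one_iff _).mpr (map_mem_hopfBot_of_mem_commutator_ker _ hd), inv_one,
      mul_one, huy]

end FreeProduct

theorem Subring.inv_den_mem {R : Subring ℚ} {q : ℚ} (hq : q ∈ R) : (q.den : ℚ)⁻¹ ∈ R := by
  have hgcd : (1 : ℤ) = q.num * q.num.gcdA q.den + q.den * q.num.gcdB q.den := by
    rw [← Int.gcd_eq_gcd_ab, show q.num.gcd q.den = 1 from q.reduced, Nat.cast_one]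
  have hnum : (q.num : ℚ) = q * q.den := (Rat.mul_den_eq_num q).symm
  have : (q.den : ℚ)⁻¹ = q * q.num.gcdA q.den + q.num.gcdB q.den := by
    have hd : (q.den : ℚ) ≠ 0 := by exact_mod_cast q.den_nz
    have := congrArg (Int.cast : ℤ → ℚ) hgcd
    push_cast at this
    rw [hnum] at this
    field_simp
    linear_combination this
  rw [this]
  exact add_mem (mul_mem hq (intCast_mem _ _)) (intCast_mem _ _)

theorem isUnit_natCast_of_mem_DR {R : Subring ℚ} {e : ℕ} (he : e ∈ DR R) : IsUnit (e : R) := by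
  obtain ⟨q, hq, rfl⟩ := he
  refine IsUnit.of_mul_eq_one ⟨_, Subring.inv_den_mem hq⟩ (Subtype.ext ?_)
  simp [q.den_nz]

theorem LinearMap.rTensor_bijective_of_inverse {S R M N : Type*} [CommSemiring S]
    [CommSemiring R] [Algebra S R] [AddCommMonoid M] [Module S M] [AddCommMonoid N] [Module S N]
    (f : M →ₗ[S] N) (g : N →ₗ[S] M ⊗[S] R) (hgf : ∀ m, g (f m) = m ⊗ₜ 1)
    (hfg : ∀ n, f.rTensor R (g n) = n ⊗ₜ 1) : Function.Bijective (f.rTensor R) := by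
  let g' : N ⊗[S] R →ₗ[S] M ⊗[S] R := (LinearMap.mul' S R).lTensor M ∘ₗ
    (TensorProduct.assoc S M R R).toLinearMap ∘ₗ g.rTensor R
  have hnat : ∀ (x : M ⊗[S] R) (r : R), f.rTensor R ((LinearMap.mul' S R).lTensor M
      (TensorProduct.assoc S M R R (x ⊗ₜ r))) =
      (LinearMap.mul' S R).lTensor N (TensorProduct.assoc S N R R (f.rTensor R x ⊗ₜ r)) := by
    intro x r
    induction x using TensorProduct.induction_on with
    | zero => simp
    | tmul m s => simp
    | add x y hx hy => simp_all [TensorProduct.add_tmul]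
  refine ⟨Function.LeftInverse.injective (g := g') fun x => ?_,
    Function.RightInverse.surjective (g := g') fun x => ?_⟩
  · induction x using TensorProduct.induction_on with
    | zero => simp
    | tmul m r => simp [g', hgf]
    | add x y hx hy => simp_all
  · induction x using TensorProduct.induction_on with
    | zero => simp
    | tmul n r => simp [g', hnat, hfg]
    | add x y hx hy => simp_all

theorem Monoid.Coprod.apply_eq_apply_inl_fst {M : Type*} [CommGroup M] {n : ℕ}
    (h : Coprod G (FreeGroup (Fin n)) →* M) {w : Coprod G (FreeGroup (Fin n))}
    (hw : toFreeAb G n w = 1) : h w = h (inl (fst w)) := by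
  have : h = h.comp (inl.comp fst) * (Abelianization.lift (h.comp inr)).comp (toFreeAb G n) :=
    hom_ext (MonoidHom.ext fun g => by simp [toFreeAb]) (FreeGroup.ext_hom _ _ fun i => by
      simp [toFreeAb])
  conv_lhs => rw [this]
  simp [hw]

namespace NullSys

open Subgroup Monoid

variable {R : Subring ℚ} (S : NullSys R G)

def relator (i : Fin S.n) : Coprod G (FreeGroup (Fin S.n)) :=
  Coprod.inr (FreeGroup.of i) ^ S.e * (S.w i)⁻¹

abbrev relators : Subgroup (Coprod G (FreeGroup (Fin S.n))) :=
  normalClosure (Set.range S.relator)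

abbrev Adjoined : Type _ := Coprod G (FreeGroup (Fin S.n)) ⧸ S.relators

noncomputable def toAdjoined : G →* S.Adjoined := (QuotientGroup.mk' S.relators).comp Coprod.inl

theorem e_ne_zero : S.e ≠ 0 := by
  obtain ⟨q, -, hq⟩ := S.he
  exact hq ▸ q.den_nz

noncomputable def eInv : R := ↑(isUnit_natCast_of_mem_DR S.he).unit⁻¹

theorem nsmul_tmul_eInv {M : Type*} [AddCommGroup M] (x : M) :
    S.e • (x ⊗ₜ[ℤ] S.eInv) = x ⊗ₜ 1 := by
  rw [← TensorProduct.tmul_smul, nsmul_eq_mul, eInv, IsUnit.mul_val_inv]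

noncomputable def exponentSums :
    Coprod G (FreeGroup (Fin S.n)) →* Multiplicative (Fin S.n → ℤ) :=
  Coprod.lift 1 (FreeGroup.lift fun i => .ofAdd (Pi.single i 1))

theorem exponentSums_relator (i : Fin S.n) :
    S.exponentSums (S.relator i) = .ofAdd (S.e • Pi.single i 1) := by
  rw [relator, map_mul, map_inv, Coprod.apply_eq_apply_inl_fst _ (S.nullh i)]
  simp [exponentSums, ← ofAdd_nsmul]

theorem relators_inf_commutator_le :
    S.relators ⊓ commutator _ ≤ ⁅(⊤ : Subgroup (Coprod G (FreeGroup (Fin S.n)))), S.relators⁆ := by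
  refine normalClosure_range_inf_commutator_le S.relator S.exponentSums fun k hk =>
    funext fun j => ?_
  have := congrArg (fun m : Multiplicative (Fin S.n → ℤ) => m.toAdd j) hk
  simpa [exponentSums_relator, Pi.single_apply, S.e_ne_zero] using this

theorem H2Zmap_toAdjoined_surjective : Function.Surjective (H2Zmap S.toAdjoined) := by
  rw [toAdjoined, H2Zmap_comp]
  refine (H2Zmap_surjective_of_surjective (QuotientGroup.mk'_surjective _) ?_).comp
    H2Zmap_inl_surjective
  rw [QuotientGroup.ker_mk']
  exact S.relators_inf_commutator_le

noncomputable def toH1R : Coprod G (FreeGroup (Fin S.n)) →* Multiplicative (H1R R G) :=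
  Coprod.lift
    ((AddMonoidHom.toMultiplicativeRight ((TensorProduct.mk ℤ _ R).flip 1).toAddMonoidHom).comp
      Abelianization.of)
    (FreeGroup.lift fun i => .ofAdd (.ofMul (Abelianization.of (Coprod.fst (S.w i))) ⊗ₜ S.eInv))

theorem toH1R_relator (i : Fin S.n) : S.toH1R (S.relator i) = 1 := by
  rw [relator, map_mul, map_inv, map_pow, Coprod.apply_eq_apply_inl_fst _ (S.nullh i)]
  simp [toH1R, ← ofAdd_nsmul, nsmul_tmul_eInv]

noncomputable def H1Rinv : Additive (Abelianization S.Adjoined) →ₗ[ℤ] H1R R G :=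
  (MonoidHom.toAdditiveLeft (Abelianization.lift (QuotientGroup.lift _ S.toH1R
    (normalClosure_le_normal (Set.range_subset_iff.mpr S.toH1R_relator))))).toIntLinearMap

theorem of_mk_inr_pow_e (i : Fin S.n) :
    Abelianization.of (QuotientGroup.mk' S.relators (Coprod.inr (FreeGroup.of i))) ^ S.e =
      Abelianization.map S.toAdjoined (Abelianization.of (Coprod.fst (S.w i))) := by
  set h := Abelianization.of.comp (QuotientGroup.mk' S.relators)
  have hrel : h (S.relator i) = 1 := by
    rw [MonoidHom.comp_apply, QuotientGroup.mk'_apply, (QuotientGroup.eq_one_iff _).mpr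
      (subset_normalClosure (Set.mem_range_self i)), map_one]
  rw [relator, map_mul, map_inv, mul_inv_eq_one,
    Coprod.apply_eq_apply_inl_fst _ (S.nullh i)] at hrel
  simpa [h, toAdjoined] using hrel

theorem H1Rmap_toAdjoined_toH1R (q : Coprod G (FreeGroup (Fin S.n))) :
    H1Rmap R S.toAdjoined (S.toH1R q).toAdd =
      .ofMul (Abelianization.of (QuotientGroup.mk' S.relators q)) ⊗ₜ 1 := by
  have hom : (AddMonoidHom.toMultiplicative (H1Rmap R S.toAdjoined).toAddMonoidHom).comp S.toH1R =
      (AddMonoidHom.toMultiplicativeRight ((TensorProduct.mk ℤ _ R).flip 1).toAddMonoidHom).comp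
        (Abelianization.of.comp (QuotientGroup.mk' S.relators)) := by
    refine Coprod.hom_ext (MonoidHom.ext fun g => rfl) (FreeGroup.ext_hom _ _ fun i => ?_)
    show Additive.ofMul (Abelianization.map S.toAdjoined
        (Abelianization.of (Coprod.fst (S.w i)))) ⊗ₜ[ℤ] S.eInv =
      .ofMul (Abelianization.of (QuotientGroup.mk' S.relators (Coprod.inr (.of i)))) ⊗ₜ[ℤ] 1
    rw [← of_mk_inr_pow_e, ofMul_pow, ← TensorProduct.smul_tmul', nsmul_tmul_eInv]
  exact congrArg Multiplicative.toAdd (DFunLike.congr_fun hom q)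

theorem H1Rmap_toAdjoined_bijective : Function.Bijective (H1Rmap R S.toAdjoined) := by
  refine LinearMap.rTensor_bijective_of_inverse _ S.H1Rinv (fun a => ?_) (fun b => ?_)
  · obtain ⟨x, rfl⟩ := Additive.ofMul.surjective a
    induction x using QuotientGroup.induction_on with
    | H g => rfl
  · obtain ⟨x, rfl⟩ := Additive.ofMul.surjective b
    induction x using QuotientGroup.induction_on with
    | H x =>
    induction x using QuotientGroup.induction_on with
    | H q => exact S.H1Rmap_toAdjoined_toH1R q

theorem twoConnected_toAdjoined : TwoConnected R S.toAdjoined :=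
  ⟨S.H1Rmap_toAdjoined_bijective, H2Rmap_surjective S.H2Zmap_toAdjoined_surjective⟩

end NullSys

/-- Adjoining to `π` the solutions of an `R`-nullhomologous system (new generators `zᵢ` and
relations `zᵢ^e = wᵢ(z)`) yields a group `G` such that the canonical homomorphism `π → G`
induces an isomorphism on `H₁(-;R)` and a surjection on `H₂(-;R)`. -/
theorem adjoining_solutions_twoConnected (R : Subring ℚ) (P : Type*) [Group P]
    (S : NullSys R P) :
    TwoConnected R
      ((QuotientGroup.mk' (Subgroup.normalClosure
          (Set.range fun i =>
            (Monoid.Coprod.inr (FreeGroup.of i) : Monoid.Coprod P (FreeGroup (Fin S.n))) ^ S.e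
              * (S.w i)⁻¹))).comp
        (Monoid.Coprod.inl : P →* Monoid.Coprod P (FreeGroup (Fin S.n)))) :=
  S.twoConnected_toAdjoined
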